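/- arXiv:1807.11510 — 5 statements merged into one kernel-verified Lean document; each statement's English description precedes it below -/
import Mathlib

section
/- Let T and T_1, T_2, … be compact metric spaces, and for each i ∈ ℕ let ψ_i : T → T_i be a surjective continuous map. Assume: (i) for all i ≤ j and all x, y ∈ T, if ψ_j(x) = ψ_j(y) then ψ_i(x) = ψ_i(y); (ii) for all x ≠ y in T there exists i with ψ_i(x) ≠ ψ_i(y). Let (M, d) be a metric space and let f : T → M be a continuous map. Then for every ε > 0 there exists i such that for every x ∈ T_i, the diameter of f(ψ_i⁻¹({x})) is at most ε. -/
/-- Let `T` and `T₁, T₂, …` be compact metric spaces, with surjective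
continuous maps `ψ i : T → Ti i` satisfying the compatibility conditions (i) and (ii).
Then for every continuous map `f : T → M` into a metric space and every `ε > 0`
there is an `i` such that every fiber of `ψ i` has `f`-image of diameter at most `ε`. -/
theorem stmt0 {T : Type*} [MetricSpace T] [CompactSpace T]
    {Ti : ℕ → Type*} [∀ i, MetricSpace (Ti i)] [∀ i, CompactSpace (Ti i)]
    (ψ : ∀ i, T → Ti i)
    (hsurj : ∀ i, Function.Surjective (ψ i))
    (hcont : ∀ i, Continuous (ψ i))
    (hcompat : ∀ i j, i ≤ j → ∀ x y : T, ψ j x = ψ j y → ψ i x = ψ i y)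
    (hsep : ∀ x y : T, x ≠ y → ∃ i, ψ i x ≠ ψ i y)
    {M : Type*} [MetricSpace M] (f : T → M) (hf : Continuous f) :
    ∀ ε > (0 : ℝ), ∃ i, ∀ x : Ti i, Metric.diam (f '' ((ψ i) ⁻¹' {x})) ≤ ε := by
  intro ε hε
  by_contra h
  push_neg at h
  have key : ∀ i, ∃ p : T × T, ψ i p.1 = ψ i p.2 ∧ ε < dist (f p.1) (f p.2) := by
    intro i
    obtain ⟨x, hx⟩ := h i
    by_contra hc
    push_neg at hc
    refine absurd ?_ (not_le.mpr hx)
    apply Metric.diam_le_of_forall_dist_le hε.le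
    rintro p ⟨u, hu, rfl⟩ q ⟨v, hv, rfl⟩
    simp only [Set.mem_preimage, Set.mem_singleton_iff] at hu hv
    exact hc (u, v) (hu.trans hv.symm)
  choose p hab hd using key
  set a : ℕ → T := fun n => (p n).1 with ha
  set b : ℕ → T := fun n => (p n).2 with hb
  obtain ⟨x, -, φ, hφ, hax⟩ := isCompact_univ.tendsto_subseq (fun n => Set.mem_univ (a n))
  obtain ⟨y, -, σ, hσ, hby⟩ :=
    isCompact_univ.tendsto_subseq (fun n => Set.mem_univ ((b ∘ φ) n))
  have hax' : Filter.Tendsto (fun n => a (φ (σ n))) Filter.atTop (nhds x) :=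
    hax.comp hσ.tendsto_atTop
  have hby' : Filter.Tendsto (fun n => b (φ (σ n))) Filter.atTop (nhds y) := hby
  have hxy : x = y := by
    by_contra hne
    obtain ⟨i, hi⟩ := hsep x y hne
    apply hi
    have h1 : Filter.Tendsto (fun n => ψ i (a (φ (σ n)))) Filter.atTop (nhds (ψ i x)) :=
      ((hcont i).tendsto x).comp hax'
    have h2 : Filter.Tendsto (fun n => ψ i (b (φ (σ n)))) Filter.atTop (nhds (ψ i y)) :=
      ((hcont i).tendsto y).comp hby'
    have heq : ∀ᶠ n in Filter.atTop, ψ i (a (φ (σ n))) = ψ i (b (φ (σ n))) := by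
      filter_upwards [Filter.eventually_ge_atTop i] with n hn
      exact hcompat i (φ (σ n)) (hn.trans ((hσ.id_le n).trans (hφ.id_le (σ n)))) _ _
        (hab (φ (σ n)))
    exact tendsto_nhds_unique h1 (h2.congr' (heq.mono fun n hn => hn.symm))
  have hdist : Filter.Tendsto
      (fun n => dist (f (a (φ (σ n)))) (f (b (φ (σ n))))) Filter.atTop (nhds 0) := by
    have := ((hf.tendsto x).comp hax').dist ((hf.tendsto y).comp hby')
    rwa [hxy, dist_self] at this
  have := (hdist.eventually (gt_mem_nhds hε)).exists
  obtain ⟨n, hn⟩ := this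
  exact absurd (hd (φ (σ n))) (not_lt.mpr hn.le)
end

section
/- Let X₁, X₂, X₃ be nilspaces and let ψ₁ : X₁ → X₃ and ψ₂ : X₂ → X₃ be fibrations. Then the fiber product X₁ ×_{X₃} X₂ := {(x₁, x₂) ∈ X₁ × X₂ : ψ₁(x₁) = ψ₂(x₂)}, equipped for each n with the cube set consisting of those maps q : ⟦n⟧ → X₁ ×_{X₃} X₂ whose two coordinate projections lie in C^n(X₁) and C^n(X₂) respectively, is a nilspace: these cube sets are closed under composition with morphisms of discrete cubes, the 1-cubes are all maps ⟦1⟧ → X₁ ×_{X₃} X₂, and every n-corner on X₁ ×_{X₃} X₂ extends to an n-cube. -/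
/-- A morphism of discrete cubes `⟦m⟧ → ⟦n⟧`: each output coordinate is constantly
`false`, constantly `true`, some input coordinate, or the negation of one. -/
def IsCubeMorphism {m n : ℕ} (φ : (Fin m → Bool) → (Fin n → Bool)) : Prop :=
  ∀ j : Fin n,
    (∀ v, φ v j = false) ∨ (∀ v, φ v j = true) ∨
    (∃ i : Fin m, ∀ v, φ v j = v i) ∨ (∃ i : Fin m, ∀ v, φ v j = !(v i))

/-- A cubespace: a set `X` with distinguished cube sets `C^n(X)` closed under
composition with morphisms of discrete cubes, such that every map `⟦1⟧ → X` is a cube. -/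
structure Cubespace (X : Type*) where
  cubes : (n : ℕ) → Set ((Fin n → Bool) → X)
  comp_mem : ∀ {m n : ℕ} (q : (Fin n → Bool) → X) (φ : (Fin m → Bool) → (Fin n → Bool)),
    q ∈ cubes n → IsCubeMorphism φ → (q ∘ φ) ∈ cubes m
  one_cubes : ∀ q : (Fin 1 → Bool) → X, q ∈ cubes 1

/-- An `n`-corner: a map defined on `⟦n⟧ ∖ {1ⁿ}` (encoded as a total map whose value at
`1ⁿ` is irrelevant) whose restriction to each `(n-1)`-face `{v : v i = false}` not
containing `1ⁿ` is an `(n-1)`-cube. -/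
def IsNilCorner {X : Type*} (C : Cubespace X) : (n : ℕ) → ((Fin n → Bool) → X) → Prop
  | 0, _ => True
  | n + 1, q => ∀ i : Fin (n + 1),
      (fun v : Fin n → Bool => q (i.insertNth false v)) ∈ C.cubes n

/-- A nilspace: a cubespace in which for every `n ≥ 1` every `n`-corner extends to an
`n`-cube. -/
def IsNilspace {X : Type*} (C : Cubespace X) : Prop :=
  ∀ (n : ℕ) (q' : (Fin (n + 1) → Bool) → X), IsNilCorner C (n + 1) q' →
    ∃ q ∈ C.cubes (n + 1), ∀ v : Fin (n + 1) → Bool, v ≠ (fun _ => true) → q v = q' v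

/-- A morphism of cubespaces: a map carrying cubes to cubes. -/
def IsMorphism {X Y : Type*} (CX : Cubespace X) (CY : Cubespace Y) (f : X → Y) : Prop :=
  ∀ (n : ℕ) (q : (Fin n → Bool) → X), q ∈ CX.cubes n → (f ∘ q) ∈ CY.cubes n

/-- A fibration: a morphism such that for every `n ≥ 0`, every `n`-corner `q'` on `X` and
every cube `q''` of `Y` agreeing with `f ∘ q'` off `1ⁿ`, there is a cube `q` of `X`
extending `q'` with `f ∘ q = q''`. -/
def IsFibration {X Y : Type*} (CX : Cubespace X) (CY : Cubespace Y) (f : X → Y) : Prop :=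
  IsMorphism CX CY f ∧
  ∀ (n : ℕ) (q' : (Fin n → Bool) → X) (q'' : (Fin n → Bool) → Y),
    IsNilCorner CX n q' → q'' ∈ CY.cubes n →
    (∀ v : Fin n → Bool, v ≠ (fun _ => true) → q'' v = f (q' v)) →
    ∃ q ∈ CX.cubes n,
      (∀ v : Fin n → Bool, v ≠ (fun _ => true) → q v = q' v) ∧ f ∘ q = q''

/-- A translation of a cubespace: for every `n ≥ 1`, every `n`-cube `q` and every
codimension-1 face `F = {v : v i = ε}`, the map `α^F(q)` is again an `n`-cube. -/
def IsTranslation {X : Type*} (C : Cubespace X) (α : X → X) : Prop :=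
  ∀ (n : ℕ) (q : (Fin (n + 1) → Bool) → X), q ∈ C.cubes (n + 1) →
    ∀ (i : Fin (n + 1)) (ε : Bool),
      (fun v => if v i = ε then α (q v) else q v) ∈ C.cubes (n + 1)

/-- `ψ` is `α`-consistent if `ψ x = ψ y` implies `ψ (α x) = ψ (α y)`. -/
def Consistent {X Z : Type*} (ψ : X → Z) (α : X → X) : Prop :=
  ∀ x y : X, ψ x = ψ y → ψ (α x) = ψ (α y)

/-- Let `ψ₁ : X₁ → X₃` and `ψ₂ : X₂ → X₃` be fibrations between
nilspaces. Then the fiber product `{(x₁,x₂) : ψ₁ x₁ = ψ₂ x₂}`, with cubes those maps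
whose two coordinate projections are cubes of `X₁` and `X₂` respectively, is a nilspace
(the cube sets are closed under composition with morphisms of discrete cubes, all maps
`⟦1⟧ → X₁ ×_{X₃} X₂` are 1-cubes — both part of the `Cubespace` structure — and every
corner completes). -/
theorem stmt3 {X₁ X₂ X₃ : Type*}
    (C₁ : Cubespace X₁) (C₂ : Cubespace X₂) (C₃ : Cubespace X₃)
    (h₁ : IsNilspace C₁) (h₂ : IsNilspace C₂) (h₃ : IsNilspace C₃)
    (ψ₁ : X₁ → X₃) (ψ₂ : X₂ → X₃)
    (hψ₁ : IsFibration C₁ C₃ ψ₁) (hψ₂ : IsFibration C₂ C₃ ψ₂) :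
    ∃ CF : Cubespace {p : X₁ × X₂ // ψ₁ p.1 = ψ₂ p.2},
      (∀ n : ℕ, CF.cubes n =
        {q : (Fin n → Bool) → {p : X₁ × X₂ // ψ₁ p.1 = ψ₂ p.2} |
          (fun v => (q v).1.1) ∈ C₁.cubes n ∧ (fun v => (q v).1.2) ∈ C₂.cubes n}) ∧
      IsNilspace CF := by
  refine ⟨{
    cubes := fun n => {q | (fun v => (q v).1.1) ∈ C₁.cubes n ∧ (fun v => (q v).1.2) ∈ C₂.cubes n}
    comp_mem := fun q φ hq hφ =>
      ⟨C₁.comp_mem _ φ hq.1 hφ, C₂.comp_mem _ φ hq.2 hφ⟩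
    one_cubes := fun q => ⟨C₁.one_cubes _, C₂.one_cubes _⟩ }, fun _ => rfl, ?_⟩
  intro n q' hq'
  -- projections of the corner are corners
  have hc₁ : IsNilCorner C₁ (n + 1) (fun v => (q' v).1.1) := fun i => (hq' i).1
  have hc₂ : IsNilCorner C₂ (n + 1) (fun v => (q' v).1.2) := fun i => (hq' i).2
  obtain ⟨q₁, hq₁, hq₁e⟩ := h₁ n _ hc₁
  have hq'' : (ψ₁ ∘ q₁) ∈ C₃.cubes (n + 1) := hψ₁.1 _ _ hq₁
  obtain ⟨q₂, hq₂, hq₂e, hfq₂⟩ := hψ₂.2 (n + 1) (fun v => (q' v).1.2) (ψ₁ ∘ q₁) hc₂ hq''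
    (by
      intro v hv
      have := (q' v).2
      simp only [Function.comp_apply, hq₁e v hv]
      exact this)
  refine ⟨fun v => ⟨(q₁ v, q₂ v), ?_⟩, ⟨hq₁, hq₂⟩, ?_⟩
  · exact (congrFun hfq₂ v).symm
  · intro v hv
    have h1 := hq₁e v hv
    have h2 := hq₂e v hv
    ext <;> simp_all
end

section
/- Let X = Z₂ × Z₂ carry the cubes of D₁(Z₂) × D₂(Z₂) and let Y = Z₂ carry the cubes of D₂(Z₂). Let ψ : X → Y be the projection (a,b) ↦ b, and let α : X → X be the map (a,b) ↦ (a+1, b+a). Then: (1) α is a translation of X, i.e. for every n ≥ 1, every cube q of X and every codimension-1 face F of ⟦n⟧, the map α^F(q) is a cube of X; (2) ψ is a fibration; (3) ψ is not α-consistent: ψ(1,0) = ψ(0,0) but ψ(α(1,0)) ≠ ψ(α(0,0)). -/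
/-! **Statement 7.** The concrete example: `X = Z₂ × Z₂` with the cubes of
`D₁(Z₂) × D₂(Z₂)`, `Y = Z₂` with the cubes of `D₂(Z₂)`, `ψ(a,b) = b`, and
`α(a,b) = (a+1, b+a)`. Then `α` is a translation of `X`, `ψ` is a fibration, but `ψ` is
not `α`-consistent. -/

abbrev Z2 := ZMod 2

/-- `upd v i` is `v + e_i` for `v` with `v i = false`: flip the `i`-th coordinate to
`true`. -/
def upd {n : ℕ} (v : Fin n → Bool) (i : Fin n) : Fin n → Bool :=
  Function.update v i true

/-- Degree-1 condition (a): for all `i < j` and `v` with `v i = v j = false`,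
`f(v) + f(v+eᵢ) + f(v+eⱼ) + f(v+eᵢ+eⱼ) = 0`. -/
def Cond1 {n : ℕ} (f : (Fin n → Bool) → Z2) : Prop :=
  ∀ i j : Fin n, i < j → ∀ v : Fin n → Bool, v i = false → v j = false →
    f v + f (upd v i) + f (upd v j) + f (upd (upd v i) j) = 0

/-- Degree-2 condition (b): for all `i < j < k` and `v` with
`v i = v j = v k = false`, the sum of `f` over the eight points
`v + ε₁eᵢ + ε₂eⱼ + ε₃e_k` is `0`. -/
def Cond2 {n : ℕ} (f : (Fin n → Bool) → Z2) : Prop :=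
  ∀ i j k : Fin n, i < j → j < k →
    ∀ v : Fin n → Bool, v i = false → v j = false → v k = false →
      f v + f (upd v i) + f (upd v j) + f (upd v k)
        + f (upd (upd v i) j) + f (upd (upd v i) k) + f (upd (upd v j) k)
        + f (upd (upd (upd v i) j) k) = 0

/-- Cubes of `X = D₁(Z₂) × D₂(Z₂)`. -/
def CubeX {n : ℕ} (q : (Fin n → Bool) → Z2 × Z2) : Prop :=
  Cond1 (fun v => (q v).1) ∧ Cond2 (fun v => (q v).2)

/-- Cubes of `Y = D₂(Z₂)`. -/
def CubeY {n : ℕ} (q : (Fin n → Bool) → Z2) : Prop :=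
  Cond2 q

/-- An `n`-corner on `X`: a map defined off `1ⁿ` (encoded as a total map whose value at
`1ⁿ` is irrelevant) whose restriction to every `(n-1)`-face not containing `1ⁿ` is a
cube. -/
def CornerX : {n : ℕ} → ((Fin n → Bool) → Z2 × Z2) → Prop
  | 0, _ => True
  | n + 1, q => ∀ i : Fin (n + 1),
      CubeX (fun v : Fin n → Bool => q (i.insertNth false v))

/-- `ψ : X → Y` is a fibration: it maps cubes of `X` to cubes of `Y`, and every corner of
`X` whose `ψ`-image extends to a cube `q''` of `Y` can be completed to a cube of `X`
mapping onto `q''`. -/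
def FibrationXY (ψ : Z2 × Z2 → Z2) : Prop :=
  (∀ (n : ℕ) (q : (Fin n → Bool) → Z2 × Z2), CubeX q → CubeY (ψ ∘ q)) ∧
  ∀ (n : ℕ) (q' : (Fin n → Bool) → Z2 × Z2) (q'' : (Fin n → Bool) → Z2),
    CornerX q' → CubeY q'' →
    (∀ v : Fin n → Bool, v ≠ (fun _ => true) → q'' v = ψ (q' v)) →
    ∃ q : (Fin n → Bool) → Z2 × Z2, CubeX q ∧
      (∀ v : Fin n → Bool, v ≠ (fun _ => true) → q v = q' v) ∧ ψ ∘ q = q''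

/-- The projection `ψ(a,b) = b`. -/
def ψ7 : Z2 × Z2 → Z2 := fun p => p.2

/-- The map `α(a,b) = (a+1, b+a)`. -/
def α7 : Z2 × Z2 → Z2 × Z2 := fun p => (p.1 + 1, p.2 + p.1)

-- helpers
lemma upd_self {n : ℕ} (v : Fin n → Bool) (i : Fin n) : upd v i i = true :=
  by simp [upd]

lemma upd_other {n : ℕ} (v : Fin n → Bool) {i j : Fin n} (h : j ≠ i) : upd v i j = v j :=
  by simp [upd, Function.update_of_ne h]

lemma upd_comm {n : ℕ} (v : Fin n → Bool) {i j : Fin n} (h : i ≠ j) :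
    upd (upd v i) j = upd (upd v j) i :=
  Function.update_comm h _ _ _

lemma two_z2 : (2 : Z2) = 0 := rfl

lemma removeNth_upd {n : ℕ} (k : Fin (n+1)) (v : Fin (n+1) → Bool) (i : Fin n) :
    k.removeNth (upd v (k.succAbove i)) = upd (k.removeNth v) i := by
  funext j
  simp only [Fin.removeNth, upd, Function.update_apply, Fin.succAbove_right_inj]

lemma ins_removeNth {n : ℕ} (k : Fin (n+1)) (v : Fin (n+1) → Bool) (h : v k = false) :
    k.insertNth false (k.removeNth v) = v := by
  rw [← h]; exact Fin.insertNth_self_removeNth k v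

lemma ins_upd {n : ℕ} (k : Fin (n+1)) (v : Fin (n+1) → Bool) (h : v k = false) (i : Fin n) :
    k.insertNth false (upd (k.removeNth v) i) = upd v (k.succAbove i) := by
  rw [← removeNth_upd]
  exact ins_removeNth k _ (by rw [upd_other _ (Fin.ne_succAbove k i)]; exact h)

/-- The face relation: a rank-2 parallelepiped relation for the first coordinate of a
corner, valid as long as some third coordinate `k` is `false` on the base point. -/
lemma faceRel_lt {n : ℕ} {q' : (Fin (n+1) → Bool) → Z2 × Z2} (hc : CornerX q')
    {i j k : Fin (n+1)} (hij : i < j) (hik : i ≠ k) (hjk : j ≠ k)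
    (v : Fin (n+1) → Bool) (hvi : v i = false) (hvj : v j = false) (hvk : v k = false) :
    (q' v).1 + (q' (upd v i)).1 + (q' (upd v j)).1 + (q' (upd (upd v i) j)).1 = 0 := by
  obtain ⟨i', hi'⟩ := Fin.exists_succAbove_eq hik
  obtain ⟨j', hj'⟩ := Fin.exists_succAbove_eq hjk
  have hij' : i' < j' := by
    rw [← Fin.succAbove_lt_succAbove_iff (p := k), hi', hj']; exact hij
  have h := (hc k).1 i' j' hij' (k.removeNth v)
    (by simpa [Fin.removeNth, hi'] using hvi) (by simpa [Fin.removeNth, hj'] using hvj)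
  simp only at h
  rw [ins_removeNth k v hvk, ins_upd k v hvk, ins_upd k v hvk, hi', hj',
    ← removeNth_upd, hi',
    ins_upd k (upd v i) (by rw [upd_other _ (Ne.symm hik)]; exact hvk), hj'] at h
  exact h

lemma faceRel {n : ℕ} {q' : (Fin (n+1) → Bool) → Z2 × Z2} (hc : CornerX q')
    {i j k : Fin (n+1)} (hij : i ≠ j) (hik : i ≠ k) (hjk : j ≠ k)
    (v : Fin (n+1) → Bool) (hvi : v i = false) (hvj : v j = false) (hvk : v k = false) :
    (q' v).1 + (q' (upd v i)).1 + (q' (upd v j)).1 + (q' (upd (upd v i) j)).1 = 0 := by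
  rcases hij.lt_or_gt with h | h
  · exact faceRel_lt hc h hik hjk v hvi hvj hvk
  · have := faceRel_lt hc h hjk hik v hvj hvi hvk
    rw [upd_comm v hij.symm] at this
    linear_combination this

/-- All-true except at `i` and `j`. -/
def offv {m : ℕ} (i j : Fin m) : Fin m → Bool := fun l => decide (l ≠ i) && decide (l ≠ j)

lemma offv_comm {m : ℕ} (i j : Fin m) : offv i j = offv j i := by
  funext l; simp [offv, Bool.and_comm]

lemma offv_self_left {m : ℕ} (i j : Fin m) : offv i j i = false := by simp [offv]
lemma offv_self_right {m : ℕ} (i j : Fin m) : offv i j j = false := by simp [offv]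

/-- The "missing corner" sum associated to a pair of directions. -/
def Scorner {m : ℕ} (f : (Fin m → Bool) → Z2) (i j : Fin m) : Z2 :=
  f (offv i j) + f (upd (offv i j) i) + f (upd (offv i j) j)

/-- Abbreviation for the face relation hypothesis. -/
def FR {m : ℕ} (f : (Fin m → Bool) → Z2) : Prop :=
  ∀ i j k : Fin m, i ≠ j → i ≠ k → j ≠ k →
    ∀ v : Fin m → Bool, v i = false → v j = false → v k = false →
      f v + f (upd v i) + f (upd v j) + f (upd (upd v i) j) = 0

lemma Scorner_comm {m : ℕ} (f : (Fin m → Bool) → Z2) {i j : Fin m} (h : i ≠ j) :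
    Scorner f i j = Scorner f j i := by
  unfold Scorner
  rw [offv_comm]
  ring

lemma Scorner_eq {m : ℕ} {f : (Fin m → Bool) → Z2} (hf : FR f) {i j k : Fin m}
    (hij : i ≠ j) (hik : i ≠ k) (hjk : j ≠ k) :
    Scorner f i j = Scorner f i k := by
  set u : Fin m → Bool := fun l => decide (l ≠ i) && decide (l ≠ j) && decide (l ≠ k) with hu
  have hui : u i = false := by simp [hu]
  have huj : u j = false := by simp [hu]
  have huk : u k = false := by simp [hu]
  have h1 : upd u k = offv i j := by
    funext l
    by_cases hl : l = k
    · subst hl; rw [upd_self]; simp [offv, Ne.symm hik, Ne.symm hjk]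
    · rw [upd_other _ hl]; simp [hu, offv, hl]
  have h2 : upd u j = offv i k := by
    funext l
    by_cases hl : l = j
    · subst hl; rw [upd_self]; simp [offv, Ne.symm hij, hjk]
    · rw [upd_other _ hl]
      simp only [hu, offv]
      cases' eq_or_ne l i with h h
      · simp [h]
      · simp [h, hl]
  have r2 := hf i k j hik hij (Ne.symm hjk) u hui huk huj
  have r3 := hf i j k hij hik hjk u hui huj huk
  unfold Scorner
  rw [← h1, ← h2, upd_comm u (Ne.symm hik), upd_comm u (Ne.symm hjk),
    upd_comm u (Ne.symm hij)]
  linear_combination r2 - r3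

lemma Scorner_key {m : ℕ} {f : (Fin m → Bool) → Z2} (hf : FR f) {a b i j : Fin m}
    (hab : a ≠ b) (hij : i ≠ j) : Scorner f i j = Scorner f a b := by
  by_cases hia : i = a
  · subst hia
    by_cases hjb : j = b
    · subst hjb; rfl
    · exact Scorner_eq hf hij hab (fun h => hjb h)
  · by_cases hib : i = b
    · subst hib
      by_cases hja : j = a
      · subst hja; exact Scorner_comm f hij
      · calc Scorner f i j = Scorner f i a :=
              Scorner_eq hf hij (Ne.symm hab) (fun h => hja h)
          _ = Scorner f a i := Scorner_comm f (Ne.symm hab)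
    · by_cases hja : j = a
      · subst hja
        calc Scorner f i j = Scorner f j i := Scorner_comm f hij
          _ = Scorner f j b := Scorner_eq hf (Ne.symm hij) hab (fun h => hib h)
      · by_cases hjb : j = b
        · subst hjb
          calc Scorner f i j = Scorner f j i := Scorner_comm f hij
            _ = Scorner f j a := Scorner_eq hf (Ne.symm hij) (Ne.symm hab) (fun h => hia h)
            _ = Scorner f a j := Scorner_comm f (Ne.symm hab)
        · calc Scorner f i j = Scorner f i a := Scorner_eq hf hij (fun h => hia h) (fun h => hja h)
            _ = Scorner f a i := Scorner_comm f (fun h => hia h)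
            _ = Scorner f a b := Scorner_eq hf (fun h => hia h.symm) hab (fun h => hib h)

/-- Extend a corner's first coordinate by a chosen value at the all-true vertex. -/
def extCorner {m : ℕ} (f : (Fin m → Bool) → Z2) (c : Z2) : (Fin m → Bool) → Z2 :=
  fun v => if v = (fun _ => true) then c else f v

lemma extCorner_ne {m : ℕ} (f : (Fin m → Bool) → Z2) (c : Z2) {v : Fin m → Bool}
    (h : v ≠ (fun _ => true)) : extCorner f c v = f v := if_neg h

lemma extCorner_Cond1 {n : ℕ} {f : (Fin (n+2) → Bool) → Z2} (hf : FR f) :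
    Cond1 (extCorner f (Scorner f 0 1)) := by
  have h01 : (0 : Fin (n+2)) ≠ 1 := by simp [Fin.ext_iff]
  intro i j hij v hvi hvj
  have hij' : i ≠ j := Fin.ne_of_lt hij
  by_cases hB : upd (upd v i) j = (fun _ => true)
  · have hvoff : v = offv i j := by
      funext k
      by_cases hk : k = i
      · subst hk; rw [hvi, offv_self_left]
      · by_cases hk2 : k = j
        · subst hk2; rw [hvj, offv_self_right]
        · have : v k = (upd (upd v i) j) k := by rw [upd_other _ hk2, upd_other _ hk]
          rw [this, hB]
          simp [offv, hk, hk2]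
    have h1 : v ≠ (fun _ => true) := by
      intro h; rw [h] at hvi; exact Bool.noConfusion hvi
    have h2 : upd v i ≠ (fun _ => true) := by
      intro h
      have := congrFun h j
      rw [upd_other _ (Ne.symm hij'), hvj] at this
      exact Bool.noConfusion this
    have h3 : upd v j ≠ (fun _ => true) := by
      intro h
      have := congrFun h i
      rw [upd_other _ hij', hvi] at this
      exact Bool.noConfusion this
    rw [extCorner_ne f _ h1, extCorner_ne f _ h2, extCorner_ne f _ h3, hB]
    show f v + f (upd v i) + f (upd v j) + extCorner f (Scorner f 0 1) (fun _ => true) = 0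
    rw [show extCorner f (Scorner f 0 1) (fun _ => true) = Scorner f 0 1 from if_pos rfl,
      ← Scorner_key hf h01 hij']
    unfold Scorner
    rw [← hvoff]
    linear_combination (f v + f (upd v i) + f (upd v j)) * two_z2
  · have : ∃ k, (upd (upd v i) j) k = false := by
      by_contra h
      push_neg at h
      exact hB (funext fun k => by
        have := h k
        revert this
        cases (upd (upd v i) j) k <;> simp)
    obtain ⟨k, hk⟩ := this
    have hki : k ≠ i := by
      intro h; subst h
      rw [upd_other _ hij', upd_self] at hk
      exact Bool.noConfusion hk
    have hkj : k ≠ j := by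
      intro h; subst h
      rw [upd_self] at hk
      exact Bool.noConfusion hk
    have hvk : v k = false := by rwa [upd_other _ hkj, upd_other _ hki] at hk
    have nonall : ∀ w : Fin (n+2) → Bool, w k = false → w ≠ (fun _ => true) := by
      intro w hw h; rw [h] at hw; exact Bool.noConfusion hw
    rw [extCorner_ne f _ (nonall v hvk), extCorner_ne f _ (nonall _ (by rw [upd_other _ hki]; exact hvk)),
      extCorner_ne f _ (nonall _ (by rw [upd_other _ hkj]; exact hvk)),
      extCorner_ne f _ (nonall _ hk)]
    exact hf i j k hij' (Ne.symm hki) (Ne.symm hkj) v hvi hvj hvk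

lemma chi_sum {m : ℕ} (i : Fin m) (ε : Bool) {j k : Fin m} (hjk : j ≠ k)
    (v : Fin m → Bool) (hj : v j = false) (hk : v k = false) :
    (if v i = ε then (1:Z2) else 0) + (if (upd v j) i = ε then (1:Z2) else 0)
      + (if (upd v k) i = ε then (1:Z2) else 0)
      + (if (upd (upd v j) k) i = ε then (1:Z2) else 0) = 0 := by
  rcases eq_or_ne i j with rfl | hij
  · have e3 : (upd v k) i = false := by rw [upd_other _ hjk]; exact hj
    have e4 : (upd (upd v i) k) i = true := by rw [upd_other _ hjk, upd_self]
    rw [hj, upd_self, e3, e4]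
    cases ε <;> decide
  · rcases eq_or_ne i k with rfl | hik
    · have e2 : (upd v j) i = false := by rw [upd_other _ (Ne.symm hjk)]; exact hk
      have e4 : (upd (upd v j) i) i = true := upd_self _ _
      rw [hk, e2, upd_self, e4]
      cases ε <;> decide
    · have e2 : (upd v j) i = v i := upd_other _ hij
      have e3 : (upd v k) i = v i := upd_other _ hik
      have e4 : (upd (upd v j) k) i = v i := by rw [upd_other _ hik, upd_other _ hij]
      rw [e2, e3, e4]
      by_cases hv : v i = ε <;> simp [hv] <;> decide

def chiq {m : ℕ} (q1 : (Fin m → Bool) → Z2) (i : Fin m) (ε : Bool)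
    (w : Fin m → Bool) : Z2 :=
  if w i = ε then q1 w else 0

lemma chiq_sum {m : ℕ} {q1 : (Fin m → Bool) → Z2} (h1 : Cond1 q1) (i : Fin m) (ε : Bool)
    {j k l : Fin m} (hjk : j < k) (hkl : k < l) (v : Fin m → Bool)
    (hj : v j = false) (hk : v k = false) (hl : v l = false) :
    chiq q1 i ε v + chiq q1 i ε (upd v j) + chiq q1 i ε (upd v k) + chiq q1 i ε (upd v l)
      + chiq q1 i ε (upd (upd v j) k) + chiq q1 i ε (upd (upd v j) l)
      + chiq q1 i ε (upd (upd v k) l) + chiq q1 i ε (upd (upd (upd v j) k) l) = 0 := by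
  have hjk' : j ≠ k := Fin.ne_of_lt hjk
  have hkl' : k ≠ l := Fin.ne_of_lt hkl
  have hjl' : j ≠ l := Fin.ne_of_lt (hjk.trans hkl)
  unfold chiq
  rcases eq_or_ne i j with rfl | hij
  · have e3 : (upd v k) i = false := by rw [upd_other _ hjk']; exact hj
    have e4 : (upd v l) i = false := by rw [upd_other _ hjl']; exact hj
    have e5 : (upd (upd v i) k) i = true := by rw [upd_other _ hjk', upd_self]
    have e6 : (upd (upd v i) l) i = true := by rw [upd_other _ hjl', upd_self]
    have e7 : (upd (upd v k) l) i = false := by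
      rw [upd_other _ hjl', upd_other _ hjk']; exact hj
    have e8 : (upd (upd (upd v i) k) l) i = true := by
      rw [upd_other _ hjl', upd_other _ hjk', upd_self]
    rw [hj, upd_self, e3, e4, e5, e6, e7, e8]
    cases ε
    · simp only [Bool.true_eq_false, Bool.false_eq_true, if_false, if_true, add_zero, zero_add]
      linear_combination h1 k l hkl v hk hl
    · simp only [Bool.true_eq_false, Bool.false_eq_true, if_false, if_true, add_zero, zero_add]
      linear_combination h1 k l hkl (upd v i)
        (by rw [upd_other _ (Ne.symm hjk')]; exact hk)
        (by rw [upd_other _ (Ne.symm hjl')]; exact hl)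
  · rcases eq_or_ne i k with rfl | hik
    · have e2 : (upd v j) i = false := by rw [upd_other _ (Ne.symm hjk')]; exact hk
      have e4 : (upd v l) i = false := by rw [upd_other _ hkl']; exact hk
      have e5 : (upd (upd v j) i) i = true := upd_self _ _
      have e6 : (upd (upd v j) l) i = false := by
        rw [upd_other _ hkl', upd_other _ (Ne.symm hjk')]; exact hk
      have e7 : (upd (upd v i) l) i = true := by rw [upd_other _ hkl', upd_self]
      have e8 : (upd (upd (upd v j) i) l) i = true := by rw [upd_other _ hkl', upd_self]
      rw [hk, e2, upd_self, e4, e5, e6, e7, e8]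
      cases ε
      · simp only [Bool.true_eq_false, Bool.false_eq_true, if_false, if_true, add_zero, zero_add]
        linear_combination h1 j l (hjk.trans hkl) v hj hl
      · simp only [Bool.true_eq_false, Bool.false_eq_true, if_false, if_true, add_zero, zero_add]
        have A := h1 j l (hjk.trans hkl) (upd v i)
          (by rw [upd_other _ hjk']; exact hj)
          (by rw [upd_other _ (Ne.symm hkl')]; exact hl)
        rw [upd_comm v (Ne.symm hjk')] at A
        linear_combination A
    · rcases eq_or_ne i l with rfl | hil
      · have e2 : (upd v j) i = false := by rw [upd_other _ (Ne.symm hjl')]; exact hl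
        have e3 : (upd v k) i = false := by rw [upd_other _ (Ne.symm hkl')]; exact hl
        have e5 : (upd (upd v j) k) i = false := by
          rw [upd_other _ (Ne.symm hkl'), upd_other _ (Ne.symm hjl')]; exact hl
        have e6 : (upd (upd v j) i) i = true := upd_self _ _
        have e7 : (upd (upd v k) i) i = true := upd_self _ _
        have e8 : (upd (upd (upd v j) k) i) i = true := upd_self _ _
        rw [hl, e2, e3, upd_self, e5, e6, e7, e8]
        cases ε
        · simp only [Bool.true_eq_false, Bool.false_eq_true, if_false, if_true, add_zero, zero_add]
          linear_combination h1 j k hjk v hj hk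
        · simp only [Bool.true_eq_false, Bool.false_eq_true, if_false, if_true, add_zero, zero_add]
          have A := h1 j k hjk (upd v i)
            (by rw [upd_other _ hjl']; exact hj)
            (by rw [upd_other _ hkl']; exact hk)
          rw [upd_comm v (Ne.symm hjl'), upd_comm v (Ne.symm hkl'),
            upd_comm (upd v j) (Ne.symm hkl')] at A
          linear_combination A
      · have e2 : (upd v j) i = v i := upd_other _ hij
        have e3 : (upd v k) i = v i := upd_other _ hik
        have e4 : (upd v l) i = v i := upd_other _ hil
        have e5 : (upd (upd v j) k) i = v i := by rw [upd_other _ hik, upd_other _ hij]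
        have e6 : (upd (upd v j) l) i = v i := by rw [upd_other _ hil, upd_other _ hij]
        have e7 : (upd (upd v k) l) i = v i := by rw [upd_other _ hil, upd_other _ hik]
        have e8 : (upd (upd (upd v j) k) l) i = v i := by
          rw [upd_other _ hil, upd_other _ hik, upd_other _ hij]
        rw [e2, e3, e4, e5, e6, e7, e8]
        by_cases hv : v i = ε
        · simp only [if_pos hv]
          have A := h1 j k hjk v hj hk
          have B := h1 j k hjk (upd v l)
            (by rw [upd_other _ hjl']; exact hj)
            (by rw [upd_other _ hkl']; exact hk)
          rw [upd_comm v (Ne.symm hjl'), upd_comm v (Ne.symm hkl'),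
            upd_comm (upd v j) (Ne.symm hkl')] at B
          linear_combination A + B
        · simp [hv]


theorem stmt7 :
    -- (1) `α` is a translation of `X`:
    (∀ (n : ℕ) (q : (Fin (n + 1) → Bool) → Z2 × Z2), CubeX q →
      ∀ (i : Fin (n + 1)) (ε : Bool),
        CubeX (fun v => if v i = ε then α7 (q v) else q v)) ∧
    -- (2) `ψ` is a fibration:
    FibrationXY ψ7 ∧
    -- (3) `ψ` is not `α`-consistent:
    (ψ7 (1, 0) = ψ7 (0, 0) ∧ ψ7 (α7 (1, 0)) ≠ ψ7 (α7 (0, 0))) ∧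
    ¬ Consistent ψ7 α7 := by
  refine ⟨?_, ⟨fun n q hq => hq.2, ?_⟩, ⟨rfl, by decide⟩, ?_⟩
  · -- (1) translation
    rintro n q ⟨h1, h2⟩ i ε
    constructor
    · intro j k hjk v hj hk
      simp only
      have hg : ∀ w : Fin (n+1) → Bool,
          (if w i = ε then α7 (q w) else q w).1
            = (q w).1 + (if w i = ε then (1:Z2) else 0) := by
        intro w; by_cases h : w i = ε <;> simp [h, α7]
      rw [hg, hg, hg, hg]
      linear_combination h1 j k hjk v hj hk + chi_sum i ε (Fin.ne_of_lt hjk) v hj hk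
    · intro j k l hjk hkl v hj hk hl
      simp only
      have hg : ∀ w : Fin (n+1) → Bool,
          (if w i = ε then α7 (q w) else q w).2
            = (q w).2 + chiq (fun w => (q w).1) i ε w := by
        intro w; by_cases h : w i = ε <;> simp [h, α7, chiq]
      rw [hg, hg, hg, hg, hg, hg, hg, hg]
      linear_combination h2 j k l hjk hkl v hj hk hl
        + chiq_sum h1 i ε hjk hkl v hj hk hl
  · -- (2) lifting corners
    intro n q' q'' hc hq'' hagree
    match n with
    | 0 =>
      refine ⟨fun v => ((0:Z2), q'' v), ⟨fun a => a.elim0, fun a => a.elim0⟩, ?_, rfl⟩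
      intro v hv
      exact absurd (funext fun a => a.elim0) hv
    | 1 =>
      refine ⟨fun v => if v = (fun _ => true) then ((0:Z2), q'' v) else q' v,
        ⟨?_, ?_⟩, ?_, ?_⟩
      · intro a b hab
        rw [Subsingleton.elim a b] at hab
        exact absurd hab (lt_irrefl b)
      · intro a b c hab
        rw [Subsingleton.elim a b] at hab
        exact fun _ => absurd hab (lt_irrefl b)
      · intro v hv
        simp only
        rw [if_neg hv]
      · funext v
        show ψ7 (if v = (fun _ => true) then ((0:Z2), q'' v) else q' v) = q'' v
        split_ifs with h
        · subst h; rfl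
        · exact (hagree v h).symm
    | (n + 2) =>
      have hFR : FR (fun v => (q' v).1) :=
        fun i j k hij hik hjk v hvi hvj hvk => faceRel hc hij hik hjk v hvi hvj hvk
      refine ⟨fun v => (extCorner (fun v => (q' v).1)
          (Scorner (fun v => (q' v).1) 0 1) v, q'' v),
        ⟨extCorner_Cond1 hFR, hq''⟩, ?_, rfl⟩
      intro v hv
      have h1 : extCorner (fun v => (q' v).1) (Scorner (fun v => (q' v).1) 0 1) v
          = (q' v).1 := extCorner_ne _ _ hv
      have h2 : q'' v = (q' v).2 := hagree v hv
      simp only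
      rw [h1, h2]
  · -- (3) not consistent
    intro h
    have := h (1, 0) (0, 0) rfl
    exact absurd this (by decide)
end

section
/- Let A be an abelian group equipped with its standard degree-1 cube structure: a map q : ⟦n⟧ → A is a cube if and only if for every pair of indices i < j and every v ∈ ⟦n⟧ with v_i = v_j = 0, q(v) − q(v+e_i) − q(v+e_j) + q(v+e_i+e_j) = 0. Then every translation α of this cubespace is of the form α(z) = z + t for some fixed t ∈ A. Consequently, for any abelian group A′ and any map ψ : A → A′ of the form ψ(z) = h(z) + c with h : A → A′ a group homomorphism and c ∈ A′, ψ is α-consistent for every translation α of A. -/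
/-! **Statement 8.** On an abelian group `A` with its standard degree-1 cube structure,
every translation is `z ↦ z + t` for some fixed `t ∈ A`; consequently every affine map
`ψ : A → A'` (i.e. `ψ(z) = h(z) + c` with `h` a homomorphism) is `α`-consistent for every
translation `α`. -/

/-- The standard degree-1 cubes on an abelian group `A`: `q : ⟦n⟧ → A` is a cube iff for
every `i < j` and every `v` with `v i = v j = false`,
`q(v) − q(v+eᵢ) − q(v+eⱼ) + q(v+eᵢ+eⱼ) = 0`, where `v + eᵢ` flips the `i`-th coordinate
of `v` to `true`. -/
def CubeD1 {A : Type*} [AddCommGroup A] {n : ℕ} (q : (Fin n → Bool) → A) : Prop :=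
  ∀ i j : Fin n, i < j → ∀ v : Fin n → Bool, v i = false → v j = false →
    q v - q (Function.update v i true) - q (Function.update v j true)
      + q (Function.update (Function.update v i true) j true) = 0

/-- A translation of the degree-1 cubespace on `A`: for every `n ≥ 1`, every cube `q`
and every codimension-1 face `F = {v : v i = ε}`, the map equal to `α ∘ q` on `F` and to
`q` off `F` is again a cube. -/
def IsTranslationD1 {A : Type*} [AddCommGroup A] (α : A → A) : Prop :=
  ∀ (n : ℕ) (q : (Fin (n + 1) → Bool) → A), CubeD1 q →
    ∀ (i : Fin (n + 1)) (ε : Bool),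
      CubeD1 (fun v => if v i = ε then α (q v) else q v)

lemma key {A : Type*} [AddCommGroup A] (α : A → A) (hα : IsTranslationD1 α)
    (a b : A) : α b - α a = b - a := by
  have hcube : CubeD1 (fun v : Fin 2 → Bool => if v 1 = true then b else a) := by
    intro i j hij v hi hj
    fin_cases i <;> fin_cases j <;>
      simp_all [Function.update_apply]
  have h := hα 1 _ hcube 0 true 0 1 (by decide) (fun _ => false) rfl rfl
  simp [Function.update_apply] at h
  have h2 : α b - α a - (b - a) = 0 := by rw [← h]; abel
  exact sub_eq_zero.mp h2

theorem stmt8 {A A' : Type*} [AddCommGroup A] [AddCommGroup A']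
    (α : A → A) (hα : IsTranslationD1 α) :
    (∃ t : A, ∀ z : A, α z = z + t) ∧
    (∀ ψ : A → A', (∃ (h : A →+ A') (c : A'), ∀ z : A, ψ z = h z + c) →
      Consistent ψ α) := by
  have ht : ∀ z : A, α z = z + α 0 := by
    intro z
    have := key α hα 0 z
    simp at this
    rw [sub_eq_iff_eq_add] at this
    exact this
  refine ⟨⟨α 0, ht⟩, ?_⟩
  rintro ψ ⟨h, c, hψ⟩ x y hxy
  rw [hψ, hψ] at hxy
  have hx : h x = h y := by
    have := add_right_cancel hxy; exact this
  rw [ht x, ht y, hψ, hψ, map_add, map_add, hx]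
end

section
/- Let X₀ = Z₂ × Z₂ with the discrete metric d₀ (d₀(u,v) = 1 if u ≠ v and 0 otherwise), and let X = X₀^{ℕ≥1} be the countable power with the metric d(x,y) = Σ_{i≥1} 2^{-i} d₀(x_i, y_i). For each i ≥ 1 define ψ_i : X → X₀^i × Z₂ by ψ_i(x) = (x_1, …, x_i, p₂(x_{i+1})), where p₂(a,b) = b, and let α : X → X act coordinatewise by (a,b) ↦ (a+1, b+a). Then: (1) sup over y in the image of ψ_i of diam(ψ_i⁻¹(y)) equals 2^{-i}; (2) for each i, letting 𝟎 ∈ X have all coordinates equal to (0,0) and x ∈ X have x_j = (0,0) for j ≠ i+1 and x_{i+1} = (1,0), we have ψ_i(x) = ψ_i(𝟎) and ψ_i(α(x)) ≠ ψ_i(α(𝟎)); in particular ψ_i is not α-consistent. -/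
/-! **Statement 9.** Let `X₀ = Z₂ × Z₂` with the discrete metric `d₀`, and let
`X = X₀^{ℕ≥1}` with metric `d(x,y) = Σ_{i≥1} 2^{-i} d₀(xᵢ, yᵢ)`. For `i ≥ 1` let
`ψᵢ(x) = (x₁, …, xᵢ, p₂(x_{i+1}))` and let `α` act coordinatewise by
`(a,b) ↦ (a+1, b+a)`. Then (1) the sup over `y` in the image of `ψᵢ` of the diameter of
`ψᵢ⁻¹(y)` equals `2^{-i}`, and (2) `ψᵢ(x) = ψᵢ(𝟎)` but `ψᵢ(α(x)) ≠ ψᵢ(α(𝟎))` for the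
indicated points, so `ψᵢ` is not `α`-consistent. -/

abbrev X0 := ZMod 2 × ZMod 2

/-- The discrete metric on `X₀`. -/
noncomputable def d0 (u v : X0) : ℝ := if u = v then 0 else 1

/-- The metric `d(x,y) = Σ_{i≥1} 2^{-i} d₀(xᵢ, yᵢ)` on `X = X₀^{ℕ≥1}`. -/
noncomputable def dX (x y : ℕ+ → X0) : ℝ :=
  ∑' i : ℕ+, (2 : ℝ)⁻¹ ^ (i : ℕ) * d0 (x i) (y i)

/-- Diameter of a subset of `X`: the sup of distances between pairs of its points (with
the convention `sSup ∅ = 0`). -/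
noncomputable def diamX (B : Set (ℕ+ → X0)) : ℝ :=
  sSup {r : ℝ | ∃ x ∈ B, ∃ y ∈ B, r = dX x y}

/-- Projection to the second coordinate of `X₀`. -/
def p2 (u : X0) : ZMod 2 := u.2

/-- `ψᵢ(x) = (x₁, …, xᵢ, p₂(x_{i+1}))`. -/
def ψ9 (i : ℕ+) (x : ℕ+ → X0) : (Fin (i : ℕ) → X0) × ZMod 2 :=
  (fun j : Fin (i : ℕ) => x ⟨j.1 + 1, Nat.succ_pos _⟩, p2 (x (i + 1)))

/-- The coordinatewise translation `α(x)ᵢ = ((xᵢ)₁ + 1, (xᵢ)₂ + (xᵢ)₁)`. -/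
def α9 (x : ℕ+ → X0) : ℕ+ → X0 :=
  fun i => ((x i).1 + 1, (x i).2 + (x i).1)

/-- The point `𝟎 ∈ X` with all coordinates `(0,0)`. -/
def zero9 : ℕ+ → X0 := fun _ => (0, 0)

/-- The point `x ∈ X` with `x_{i+1} = (1,0)` and all other coordinates `(0,0)`. -/
def xpt9 (i : ℕ+) : ℕ+ → X0 := fun j => if j = i + 1 then (1, 0) else (0, 0)


section Aux

lemma d0_nonneg (u v : X0) : 0 ≤ d0 u v := by unfold d0; split <;> norm_num

lemma d0_le_one (u v : X0) : d0 u v ≤ 1 := by unfold d0; split <;> norm_num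

/-- The tail bound function. -/
noncomputable def F9 (i : ℕ) : ℕ → ℝ := fun n => if n < i then 0 else (2 : ℝ)⁻¹ ^ (n + 1)

lemma summable_F9 (i : ℕ) : Summable (F9 i) := by
  apply Summable.of_nonneg_of_le (f := fun n => (2 : ℝ)⁻¹ ^ n)
  · intro n; unfold F9; split <;> positivity
  · intro n; unfold F9; split
    · positivity
    · exact pow_le_pow_of_le_one (by norm_num) (by norm_num) (Nat.le_succ n)
  · exact summable_geometric_of_lt_one (by norm_num) (by norm_num)

lemma tsum_F9 (i : ℕ) : ∑' n : ℕ, F9 i n = (2 : ℝ)⁻¹ ^ i := by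
  induction i with
  | zero =>
    have : F9 0 = fun n : ℕ => (2 : ℝ)⁻¹ * (2 : ℝ)⁻¹ ^ n := by
      funext n; simp [F9, pow_succ, mul_comm]
    rw [this, tsum_mul_left, tsum_geometric_of_lt_one (by norm_num) (by norm_num)]
    norm_num
  | succ i ih =>
    have hsplit : F9 i = fun n => F9 (i + 1) n + (if n = i then (2 : ℝ)⁻¹ ^ (i + 1) else 0) := by
      funext n
      rcases lt_trichotomy n i with h | h | h
      · simp [F9, h, Nat.lt_succ_of_lt h, Nat.ne_of_lt h]
      · subst h; simp [F9]
      · simp [F9, Nat.lt_asymm h, not_lt.mpr (Nat.succ_le_of_lt h), Nat.ne_of_gt h,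
          not_lt.mpr h.le]
    have hs2 : Summable (fun n : ℕ => if n = i then (2 : ℝ)⁻¹ ^ (i + 1) else 0) :=
      (hasSum_ite_eq i _).summable
    have := ih
    rw [hsplit, Summable.tsum_add (summable_F9 (i + 1)) hs2, tsum_ite_eq] at this
    have hp : (2 : ℝ)⁻¹ ^ i = 2 * (2 : ℝ)⁻¹ ^ (i + 1) := by ring
    linarith [this]

lemma succPNat_coe (n : ℕ) : ((n.succPNat : ℕ+) : ℕ) = n + 1 := rfl

lemma dX_eq (x y : ℕ+ → X0) :
    dX x y = ∑' n : ℕ, (2 : ℝ)⁻¹ ^ (n + 1) * d0 (x n.succPNat) (y n.succPNat) := by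
  rw [dX, ← Equiv.pnatEquivNat.symm.tsum_eq
    (fun j : ℕ+ => (2 : ℝ)⁻¹ ^ (j : ℕ) * d0 (x j) (y j))]
  rfl

lemma summable_term (x y : ℕ+ → X0) :
    Summable (fun n : ℕ => (2 : ℝ)⁻¹ ^ (n + 1) * d0 (x n.succPNat) (y n.succPNat)) := by
  apply Summable.of_nonneg_of_le (f := F9 0)
  · intro n; have := d0_nonneg (x n.succPNat) (y n.succPNat); positivity
  · intro n
    simpa [F9] using
      mul_le_of_le_one_right (by positivity : (0:ℝ) ≤ (2 : ℝ)⁻¹ ^ (n + 1))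
        (d0_le_one (x n.succPNat) (y n.succPNat))
  · exact summable_F9 0

lemma dX_le (i : ℕ+) (x y : ℕ+ → X0) (h : ∀ j : ℕ+, (j : ℕ) ≤ (i : ℕ) → x j = y j) :
    dX x y ≤ (2 : ℝ)⁻¹ ^ (i : ℕ) := by
  rw [dX_eq, ← tsum_F9 (i : ℕ)]
  refine Summable.tsum_le_tsum ?_ (summable_term x y) (summable_F9 (i : ℕ))
  intro n
  by_cases hn : n < (i : ℕ)
  · have hx : x n.succPNat = y n.succPNat := h _ (by rw [succPNat_coe]; omega)
    simp [F9, hn, hx, d0]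
  · simp only [F9, hn, if_false]
    exact mul_le_of_le_one_right (by positivity) (d0_le_one _ _)

lemma fiber_agree (i : ℕ+) {x y : ℕ+ → X0} (h : ψ9 i x = ψ9 i y) :
    ∀ j : ℕ+, (j : ℕ) ≤ (i : ℕ) → x j = y j := by
  intro j hj
  have hpos := j.pos
  have h1 := congrFun (congrArg Prod.fst h) ⟨(j : ℕ) - 1, by omega⟩
  simp only [ψ9] at h1
  have hjj : (⟨(j : ℕ) - 1 + 1, Nat.succ_pos _⟩ : ℕ+) = j := by
    apply PNat.coe_injective; simp; omega
  rwa [hjj] at h1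

/-- The far point in the fiber of `ψ9 i zero9` at distance `2^{-i}` from `zero9`. -/
def y9 (i : ℕ+) : ℕ+ → X0 :=
  fun j => if (j : ℕ) ≤ (i : ℕ) then (0, 0) else if j = i + 1 then (1, 0) else (1, 1)

lemma psi_y9 (i : ℕ+) : ψ9 i (y9 i) = ψ9 i zero9 := by
  unfold ψ9 y9 zero9 p2
  refine Prod.ext ?_ ?_
  · funext j
    have : (j : ℕ) + 1 ≤ (i : ℕ) := j.2
    simp [this]
  · have h1 : ¬ (((i + 1 : ℕ+) : ℕ) ≤ (i : ℕ)) := by simp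
    simp [h1]

lemma d0_zero_y9 (i : ℕ+) (j : ℕ+) :
    d0 (zero9 j) (y9 i j) = if (j : ℕ) ≤ (i : ℕ) then 0 else 1 := by
  unfold d0 zero9 y9
  by_cases hj : (j : ℕ) ≤ (i : ℕ)
  · simp [hj]
  · simp only [hj, if_false]
    split
    · rw [if_neg]; simp [Prod.ext_iff]
    · rw [if_neg]; simp [Prod.ext_iff]

lemma dX_zero_y9 (i : ℕ+) : dX zero9 (y9 i) = (2 : ℝ)⁻¹ ^ (i : ℕ) := by
  rw [dX_eq, ← tsum_F9 (i : ℕ)]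
  refine tsum_congr fun n => ?_
  rw [d0_zero_y9]
  rw [succPNat_coe]
  by_cases hn : n < (i : ℕ)
  · have : n + 1 ≤ (i : ℕ) := hn
    simp [F9, hn, this]
  · have : ¬ (n + 1 ≤ (i : ℕ)) := by omega
    simp [F9, hn, this]

end Aux

theorem stmt9 :
    -- (1) the sup of the fiber diameters of `ψᵢ` equals `2^{-i}`:
    (∀ i : ℕ+,
      sSup {r : ℝ | ∃ y ∈ Set.range (ψ9 i), r = diamX (ψ9 i ⁻¹' {y})}
        = (2 : ℝ)⁻¹ ^ (i : ℕ)) ∧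
    -- (2) `ψᵢ` identifies `x` and `𝟎` but not their images under `α`; in particular
    -- `ψᵢ` is not `α`-consistent:
    (∀ i : ℕ+,
      ψ9 i (xpt9 i) = ψ9 i zero9 ∧
      ψ9 i (α9 (xpt9 i)) ≠ ψ9 i (α9 zero9) ∧
      ¬ Consistent (ψ9 i) α9) := by
  have key1 : ∀ i : ℕ+,
      sSup {r : ℝ | ∃ y ∈ Set.range (ψ9 i), r = diamX (ψ9 i ⁻¹' {y})}
        = (2 : ℝ)⁻¹ ^ (i : ℕ) := by
    intro i
    set c : ℝ := (2 : ℝ)⁻¹ ^ (i : ℕ) with hc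
    have hcpos : (0 : ℝ) ≤ c := by positivity
    -- every fiber diameter is ≤ c
    have hub : ∀ r ∈ {r : ℝ | ∃ y ∈ Set.range (ψ9 i), r = diamX (ψ9 i ⁻¹' {y})}, r ≤ c := by
      rintro r ⟨y, -, rfl⟩
      refine Real.sSup_le ?_ hcpos
      rintro s ⟨a, ha, b, hb, rfl⟩
      have hab : ψ9 i a = ψ9 i b := by
        simp only [Set.mem_preimage, Set.mem_singleton_iff] at ha hb
        rw [ha, hb]
      exact dX_le i a b (fiber_agree i hab)
    -- the fiber of the zero point achieves c
    have hdiam : diamX (ψ9 i ⁻¹' {ψ9 i zero9}) = c := by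
      refine le_antisymm ?_ ?_
      · refine Real.sSup_le ?_ hcpos
        rintro s ⟨a, ha, b, hb, rfl⟩
        have hab : ψ9 i a = ψ9 i b := by
          simp only [Set.mem_preimage, Set.mem_singleton_iff] at ha hb
          rw [ha, hb]
        exact dX_le i a b (fiber_agree i hab)
      · have hbdd : BddAbove {r : ℝ | ∃ x ∈ ψ9 i ⁻¹' {ψ9 i zero9},
            ∃ y ∈ ψ9 i ⁻¹' {ψ9 i zero9}, r = dX x y} := by
          refine ⟨c, ?_⟩
          rintro s ⟨a, ha, b, hb, rfl⟩
          have hab : ψ9 i a = ψ9 i b := by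
            simp only [Set.mem_preimage, Set.mem_singleton_iff] at ha hb
            rw [ha, hb]
          exact dX_le i a b (fiber_agree i hab)
        have hmem : c ∈ {r : ℝ | ∃ x ∈ ψ9 i ⁻¹' {ψ9 i zero9},
            ∃ y ∈ ψ9 i ⁻¹' {ψ9 i zero9}, r = dX x y} := by
          refine ⟨zero9, by simp, y9 i, ?_, (dX_zero_y9 i).symm⟩
          simp [Set.mem_preimage, psi_y9 i]
        exact le_csSup hbdd hmem
    refine le_antisymm (Real.sSup_le hub hcpos) ?_
    refine le_csSup ⟨c, hub⟩ ?_
    exact ⟨ψ9 i zero9, ⟨zero9, rfl⟩, hdiam.symm⟩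
  have key2 : ∀ i : ℕ+, ψ9 i (xpt9 i) = ψ9 i zero9 := by
    intro i
    have hne : ∀ j : Fin (i : ℕ), xpt9 i ⟨j.1 + 1, Nat.succ_pos _⟩ = (0, 0) := by
      intro j
      have hj : j.1 < (i : ℕ) := j.2
      unfold xpt9; rw [if_neg]
      intro h
      have h2 : ((⟨j.1 + 1, Nat.succ_pos _⟩ : ℕ+) : ℕ) = ((i + 1 : ℕ+) : ℕ) :=
        congrArg PNat.val h
      rw [PNat.add_coe, PNat.one_coe] at h2
      simp only [PNat.mk_coe] at h2
      omega
    have hx1 : xpt9 i (i + 1) = (1, 0) := by simp [xpt9]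
    refine Prod.ext (funext fun j => ?_) ?_
    · show xpt9 i ⟨j.1 + 1, Nat.succ_pos _⟩ = zero9 ⟨j.1 + 1, Nat.succ_pos _⟩
      rw [hne j]; rfl
    · show p2 (xpt9 i (i + 1)) = p2 (zero9 (i + 1))
      rw [hx1]; rfl
  have key3 : ∀ i : ℕ+, ψ9 i (α9 (xpt9 i)) ≠ ψ9 i (α9 zero9) := by
    intro i h
    have h2 := congrArg Prod.snd h
    have hx1 : xpt9 i (i + 1) = (1, 0) := by simp [xpt9]
    have e1 : (ψ9 i (α9 (xpt9 i))).2 = 1 := by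
      show p2 (α9 (xpt9 i) (i + 1)) = 1
      rw [α9, p2, hx1]; norm_num
    have e2 : (ψ9 i (α9 zero9)).2 = 0 := by
      show p2 (α9 zero9 (i + 1)) = 0
      rw [α9, p2, zero9]; norm_num
    rw [e1, e2] at h2
    exact one_ne_zero h2
  refine ⟨key1, fun i => ⟨key2 i, key3 i, fun hc => key3 i (hc _ _ (key2 i))⟩⟩
end
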